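/- Let n≥2, t>0, x<y, and a_0,…,a_{n−1}∈ℝ with a_i≤y for all 0≤i≤n−1. Then, writing 𝐚=(a_0,…,a_{n−1}), I_n(t;𝐚,x) ≤ (n/((y−x)t))·I_n(t;𝐚,y). -/

import Mathlib

open MeasureTheory Filter

/-- The function `I_n(t; a_0,…,a_n)` of the paper:
`I_n(t;a) = e^{t a_n} ∫_{ℝ₊^n} exp{Σ_{i<n} x_i(a_i−a_n)} 1{Σ_{i<n} x_i < t} dx`. -/
noncomputable def Ifun (n : ℕ) (t : ℝ) (a : Fin (n+1) → ℝ) : ℝ :=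
  Real.exp (t * a (Fin.last n)) *
    ∫ x : Fin n → ℝ,
      Set.indicator {y : Fin n → ℝ | (∀ i, 0 ≤ y i) ∧ (∑ i, y i) < t}
        (fun y => Real.exp (∑ i, y i * (a i.castSucc - a (Fin.last n)))) x

/-
Write `d = y - x`. Up to the factors `e^{tx}` and `e^{ty}`, both sides are integrals over
`S_t = {z ≥ 0, ∑ zᵢ < t}` of `f z = exp (∑ zᵢ (aᵢ - y))`, with the extra weight `e^{d ∑ zᵢ}` on the
left. Since `aᵢ ≤ y`, `f` does not decrease when `z` is scaled towards the origin, so the change of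
variables `z ↦ (r/t) z` gives `G(r) ≥ (r/t)ⁿ G(t)` for `G(r) = ∫_{S_r} f`. By Fubini,
`∫_{S_t} f e^{d∑z} = e^{dt} G(t) - ∫₀ᵗ d e^{dr} G(r) dr`; inserting the lower bound for `G` and
integrating by parts leaves `G(t) t⁻ⁿ ∫₀ᵗ n rⁿ⁻¹ e^{dr} dr ≤ n e^{dt} G(t) / (d t)`.
-/

open Real Set

def simplexLT (n : ℕ) (r : ℝ) : Set (Fin n → ℝ) := {x | (∀ i, 0 ≤ x i) ∧ ∑ i, x i < r}

section

variable {n : ℕ}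

lemma measurableSet_mem_simplexLT :
    MeasurableSet {p : (Fin n → ℝ) × ℝ | p.1 ∈ simplexLT n p.2} := by
  have h : {p : (Fin n → ℝ) × ℝ | p.1 ∈ simplexLT n p.2}
      = (⋂ i, {p | 0 ≤ p.1 i}) ∩ {p | ∑ i, p.1 i < p.2} := by
    ext p
    simp [simplexLT]
  rw [h]
  exact (MeasurableSet.iInter fun i => measurableSet_le measurable_const (by fun_prop)).inter
    (measurableSet_lt (by fun_prop) measurable_snd)

lemma measurableSet_simplexLT (n : ℕ) (r : ℝ) : MeasurableSet (simplexLT n r) :=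
  measurableSet_mem_simplexLT.preimage (measurable_prodMk_right (y := r))

lemma simplexLT_subset_Icc {r : ℝ} : simplexLT n r ⊆ Icc 0 fun _ => r :=
  fun _ hx => ⟨hx.1, fun i => (Finset.single_le_sum (fun j _ => hx.1 j) (Finset.mem_univ i)).trans
    hx.2.le⟩

lemma simplexLT_mono {r r' : ℝ} (h : r ≤ r') : simplexLT n r ⊆ simplexLT n r' :=
  fun _ hx => ⟨hx.1, hx.2.trans_le h⟩

lemma smul_mem_simplexLT_iff {c : ℝ} (hc : 0 < c) {r : ℝ} {x : Fin n → ℝ} :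
    c • x ∈ simplexLT n (c * r) ↔ x ∈ simplexLT n r := by
  simp only [simplexLT, mem_ofPred_eq, Pi.smul_apply, smul_eq_mul, ← Finset.mul_sum,
    mul_lt_mul_iff_right₀ hc, mul_nonneg_iff_of_pos_left hc]

lemma indicator_simplexLT_mul_smul (f : (Fin n → ℝ) → ℝ) {c : ℝ} (hc : 0 < c) (r : ℝ)
    (x : Fin n → ℝ) :
    (simplexLT n (c * r)).indicator f (c • x)
      = (simplexLT n r).indicator (fun x => f (c • x)) x := by
  by_cases hx : x ∈ simplexLT n r
  · rw [indicator_of_mem hx, indicator_of_mem ((smul_mem_simplexLT_iff hc).2 hx)]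
  · rw [indicator_of_notMem hx, indicator_of_notMem (mt (smul_mem_simplexLT_iff hc).1 hx)]

lemma setIntegral_simplexLT_mul (f : (Fin n → ℝ) → ℝ) {c : ℝ} (hc : 0 < c) (r : ℝ) :
    ∫ x in simplexLT n (c * r), f x = c ^ n * ∫ x in simplexLT n r, f (c • x) := by
  have h := Measure.integral_comp_smul_of_nonneg volume
    ((simplexLT n (c * r)).indicator f) c (hR := hc.le)
  simp only [indicator_simplexLT_mul_smul f hc, integral_indicator (measurableSet_simplexLT _ _),
    Module.finrank_fin_fun, smul_eq_mul] at h
  rw [h, ← mul_assoc, mul_inv_cancel₀ (pow_ne_zero _ hc.ne'), one_mul]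

lemma integrableOn_simplexLT_comp_smul {f : (Fin n → ℝ) → ℝ} {c r : ℝ} (hc : 0 < c)
    (hf : IntegrableOn f (simplexLT n (c * r))) :
    IntegrableOn (fun x => f (c • x)) (simplexLT n r) := by
  rw [← integrable_indicator_iff (measurableSet_simplexLT n r)]
  simpa only [indicator_simplexLT_mul_smul f hc] using
    (hf.integrable_indicator (measurableSet_simplexLT n _)).comp_smul hc.ne'

lemma pow_mul_setIntegral_simplexLT_le {f : (Fin n → ℝ) → ℝ} {c t : ℝ} (hc0 : 0 < c)
    (hc1 : c ≤ 1) (ht : 0 ≤ t) (hf : IntegrableOn f (simplexLT n t))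
    (hrad : ∀ x ∈ simplexLT n t, f x ≤ f (c • x)) :
    c ^ n * ∫ x in simplexLT n t, f x ≤ ∫ x in simplexLT n (c * t), f x := by
  have hfc : IntegrableOn (fun x => f (c • x)) (simplexLT n t) :=
    integrableOn_simplexLT_comp_smul hc0
      (hf.mono_set (simplexLT_mono (mul_le_of_le_one_left ht hc1)))
  rw [setIntegral_simplexLT_mul f hc0]
  exact mul_le_mul_of_nonneg_left (setIntegral_mono_on hf hfc (measurableSet_simplexLT n t) hrad)
    (pow_nonneg hc0.le n)

lemma monotoneOn_setIntegral_simplexLT {f : (Fin n → ℝ) → ℝ} {t : ℝ}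
    (hf0 : ∀ x ∈ simplexLT n t, 0 ≤ f x) (hf : IntegrableOn f (simplexLT n t)) :
    MonotoneOn (fun r => ∫ x in simplexLT n r, f x) (Iic t) := by
  intro r hr r' hr' hrr'
  exact setIntegral_mono_set (hf.mono_set (simplexLT_mono hr'))
    (ae_restrict_of_forall_mem (measurableSet_simplexLT n r') fun x hx =>
      hf0 x (simplexLT_mono hr' hx))
    (simplexLT_mono hrr').eventuallyLE

lemma integral_mul_exp_mul (d a b : ℝ) :
    ∫ r in a..b, d * exp (d * r) = exp (d * b) - exp (d * a) := by
  refine intervalIntegral.integral_eq_sub_of_hasDerivAt (f := fun r => exp (d * r)) (fun r _ => ?_)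
    ((by fun_prop : Continuous fun r => d * exp (d * r)).intervalIntegrable _ _)
  simpa [mul_comm] using ((hasDerivAt_id r).const_mul d).exp

lemma integral_indicator_simplexLT_mul_indicator_Ioc (f : (Fin n → ℝ) → ℝ) (d t : ℝ)
    (x : Fin n → ℝ) :
    ∫ r, (simplexLT n r).indicator f x * (Ioc 0 t).indicator (fun r => d * exp (d * r)) r
      = (simplexLT n t).indicator (fun x => f x * (exp (d * t) - exp (d * ∑ i, x i))) x := by
  by_cases hx : ∀ i, 0 ≤ x i
  · have hsum : 0 ≤ ∑ i, x i := Finset.sum_nonneg fun i _ => hx i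
    have hslice : (fun r => (simplexLT n r).indicator f x
          * (Ioc 0 t).indicator (fun r => d * exp (d * r)) r)
        = (Ioc (∑ i, x i) t).indicator fun r => f x * (d * exp (d * r)) := by
      funext r
      by_cases hr : ∑ i, x i < r
      · have hxr : x ∈ simplexLT n r := ⟨hx, hr⟩
        by_cases hrt : r ≤ t
        · simp [indicator_of_mem hxr, hr, hrt, hsum.trans_lt hr]
        · simp [hrt]
      · have hxr : x ∉ simplexLT n r := fun h => hr h.2
        simp [hxr, hr]
    rw [hslice, integral_indicator measurableSet_Ioc, integral_const_mul]
    by_cases hxt : ∑ i, x i < t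
    · rw [indicator_of_mem (show x ∈ simplexLT n t from ⟨hx, hxt⟩),
        ← intervalIntegral.integral_of_le hxt.le, integral_mul_exp_mul]
    · rw [indicator_of_notMem (s := simplexLT n t) (fun h => hxt h.2), Ioc_eq_empty hxt,
        Measure.restrict_empty, integral_zero_measure, mul_zero]
  · have hmem : ∀ r, x ∉ simplexLT n r := fun r h => hx h.1
    simp [hmem]

lemma integrable_indicator_simplexLT_mul_indicator_Ioc {f : (Fin n → ℝ) → ℝ} {t : ℝ}
    (hf : IntegrableOn f (simplexLT n t)) (d : ℝ) :
    Integrable (Function.uncurry fun x r =>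
      (simplexLT n r).indicator f x * (Ioc 0 t).indicator (fun r => d * exp (d * r)) r)
      (volume.prod volume) := by
  have hφ : Integrable ((Ioc 0 t).indicator fun r => d * exp (d * r)) :=
    ((by fun_prop : Continuous fun r => d * exp (d * r)).integrableOn_Ioc).integrable_indicator
      measurableSet_Ioc
  have h : (Function.uncurry fun x r =>
        (simplexLT n r).indicator f x * (Ioc 0 t).indicator (fun r => d * exp (d * r)) r)
      = {p | p.1 ∈ simplexLT n p.2}.indicator fun p =>
          (simplexLT n t).indicator f p.1 * (Ioc 0 t).indicator (fun r => d * exp (d * r)) p.2 := by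
    funext ⟨x, r⟩
    by_cases hxr : x ∈ simplexLT n r
    · rw [indicator_of_mem (show (x, r) ∈ {p | p.1 ∈ simplexLT n p.2} from hxr)]
      by_cases hr : r ∈ Ioc 0 t
      · simp [hxr, hr, indicator_of_mem (simplexLT_mono hr.2 hxr)]
      · simp [hr]
    · simp [hxr]
  rw [h]
  exact ((hf.integrable_indicator (measurableSet_simplexLT n t)).mul_prod hφ).indicator
    measurableSet_mem_simplexLT

lemma setIntegral_simplexLT_mul_exp_sum {f : (Fin n → ℝ) → ℝ} {t : ℝ}
    (hf : IntegrableOn f (simplexLT n t)) (d : ℝ) :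
    ∫ x in simplexLT n t, f x * exp (d * ∑ i, x i)
      = exp (d * t) * (∫ x in simplexLT n t, f x)
        - ∫ r in Ioc 0 t, (∫ x in simplexLT n r, f x) * (d * exp (d * r)) := by
  have hswap := integral_integral_swap (integrable_indicator_simplexLT_mul_indicator_Ioc hf d)
  simp only [integral_indicator_simplexLT_mul_indicator_Ioc, integral_mul_const,
    integral_indicator (measurableSet_simplexLT n _)] at hswap
  have hexp : IntegrableOn (fun x => f x * exp (d * ∑ i, x i)) (simplexLT n t) :=
    hf.mul_continuousOn_of_subset (by fun_prop) (measurableSet_simplexLT n t) isCompact_Icc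
      simplexLT_subset_Icc
  have hRHS : ∫ r in Ioc 0 t, (∫ x in simplexLT n r, f x) * (d * exp (d * r))
      = ∫ r, (∫ x in simplexLT n r, f x) * (Ioc 0 t).indicator (fun r => d * exp (d * r)) r := by
    rw [← integral_indicator measurableSet_Ioc]
    simp_rw [indicator_mul_right]
  simp_rw [mul_sub] at hswap
  rw [hRHS, ← hswap, integral_sub (hf.mul_const _) hexp, integral_mul_const]
  ring

lemma pow_mul_exp_sub_integral_le (hn : n ≠ 0) {d t : ℝ} (hd : 0 < d) (ht : 0 ≤ t) :
    t ^ n * exp (d * t) - ∫ r in Ioc 0 t, r ^ n * (d * exp (d * r))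
      ≤ n * t ^ (n - 1) * exp (d * t) / d := by
  have hcont₁ : Continuous fun r : ℝ => n * r ^ (n - 1) * exp (d * r) := by fun_prop
  have hcont₂ : Continuous fun r : ℝ => r ^ n * (d * exp (d * r)) := by fun_prop
  have hftc : ∫ r in 0..t, (n * r ^ (n - 1) * exp (d * r) + r ^ n * (d * exp (d * r)))
      = t ^ n * exp (d * t) := by
    rw [intervalIntegral.integral_eq_sub_of_hasDerivAt (f := fun r => r ^ n * exp (d * r))
      (fun r _ => ?_) ((hcont₁.intervalIntegrable _ _).add (hcont₂.intervalIntegrable _ _))]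
    · simp [zero_pow hn]
    · exact ((hasDerivAt_pow n r).mul ((hasDerivAt_id' r).const_mul d).exp).congr_deriv
        (by ring)
  have hbound : ∫ r in 0..t, n * r ^ (n - 1) * exp (d * r)
      ≤ ∫ r in 0..t, n * t ^ (n - 1) / d * (d * exp (d * r)) := by
    have hcont₃ : Continuous fun r : ℝ => n * t ^ (n - 1) / d * (d * exp (d * r)) := by fun_prop
    refine intervalIntegral.integral_mono_on ht (hcont₁.intervalIntegrable _ _)
      (hcont₃.intervalIntegrable _ _) fun r hr => ?_
    rw [div_mul_eq_mul_div, mul_div_assoc, mul_div_cancel_left₀ _ hd.ne']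
    gcongr
    exacts [hr.1, hr.2]
  rw [intervalIntegral.integral_const_mul, integral_mul_exp_mul, mul_zero, exp_zero] at hbound
  rw [intervalIntegral.integral_add (hcont₁.intervalIntegrable _ _)
    (hcont₂.intervalIntegrable _ _)] at hftc
  simp only [intervalIntegral.integral_of_le ht] at hftc hbound
  have hexp : n * t ^ (n - 1) / d * (exp (d * t) - 1) ≤ n * t ^ (n - 1) * exp (d * t) / d := by
    calc n * t ^ (n - 1) / d * (exp (d * t) - 1) ≤ n * t ^ (n - 1) / d * exp (d * t) := by
          gcongr; linarith
      _ = n * t ^ (n - 1) * exp (d * t) / d := by ring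
  linarith

theorem setIntegral_simplexLT_mul_exp_sum_le {f : (Fin n → ℝ) → ℝ} {d t : ℝ} (hn : n ≠ 0)
    (hd : 0 < d) (ht : 0 < t) (hf0 : ∀ x ∈ simplexLT n t, 0 ≤ f x)
    (hf : IntegrableOn f (simplexLT n t))
    (hrad : ∀ x ∈ simplexLT n t, ∀ c ∈ Ioc (0 : ℝ) 1, f x ≤ f (c • x)) :
    ∫ x in simplexLT n t, f x * exp (d * ∑ i, x i)
      ≤ n / (d * t) * exp (d * t) * ∫ x in simplexLT n t, f x := by
  set G := ∫ x in simplexLT n t, f x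
  have hG : 0 ≤ G := setIntegral_nonneg (measurableSet_simplexLT n t) hf0
  have hlow : ∀ r ∈ Ioc 0 t, r ^ n / t ^ n * G * (d * exp (d * r))
      ≤ (∫ x in simplexLT n r, f x) * (d * exp (d * r)) := by
    intro r hr
    have hc : r / t ∈ Ioc (0 : ℝ) 1 := ⟨div_pos hr.1 ht, (div_le_one ht).2 hr.2⟩
    have h := pow_mul_setIntegral_simplexLT_le hc.1 hc.2 ht.le hf fun x hx => hrad x hx _ hc
    rw [div_mul_cancel₀ _ ht.ne', div_pow] at h
    gcongr
  have hint : IntegrableOn (fun r => (∫ x in simplexLT n r, f x) * (d * exp (d * r))) (Ioc 0 t) :=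
    ((((monotoneOn_setIntegral_simplexLT hf0 hf).mono Icc_subset_Iic_self).integrableOn_isCompact
      isCompact_Icc).mul_continuousOn (by fun_prop) isCompact_Icc).mono_set Ioc_subset_Icc_self
  have hmono := setIntegral_mono_on
    (by fun_prop : Continuous fun r => r ^ n / t ^ n * G * (d * exp (d * r))).integrableOn_Ioc
    hint measurableSet_Ioc hlow
  have hpull : ∫ r in Ioc 0 t, r ^ n / t ^ n * G * (d * exp (d * r))
      = G / t ^ n * ∫ r in Ioc 0 t, r ^ n * (d * exp (d * r)) := by
    rw [← integral_const_mul]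
    congr 1 with r
    ring
  have hcalc := pow_mul_exp_sub_integral_le hn hd ht.le
  rw [setIntegral_simplexLT_mul_exp_sum hf d]
  calc exp (d * t) * G - ∫ r in Ioc 0 t, (∫ x in simplexLT n r, f x) * (d * exp (d * r))
      ≤ G / t ^ n * (t ^ n * exp (d * t) - ∫ r in Ioc 0 t, r ^ n * (d * exp (d * r))) := by
        have hcancel : G / t ^ n * (t ^ n * exp (d * t)) = exp (d * t) * G := by
          field_simp
        rw [mul_sub, ← hpull, hcancel]
        linarith
    _ ≤ G / t ^ n * (n * t ^ (n - 1) * exp (d * t) / d) := by gcongr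
    _ = n / (d * t) * exp (d * t) * G := by
        rw [← pow_sub_one_mul hn t]
        field_simp

lemma Ifun_snoc (t : ℝ) (a : Fin n → ℝ) (b : ℝ) :
    Ifun n t (Fin.snoc a b) = exp (t * b) * ∫ x in simplexLT n t, exp (∑ i, x i * (a i - b)) := by
  simp only [Ifun, Fin.snoc_castSucc, Fin.snoc_last]
  rw [← integral_indicator (measurableSet_simplexLT n t)]
  rfl

lemma exp_sum_mul_le_exp_sum_smul_mul {b z : Fin n → ℝ} (hb : ∀ i, b i ≤ 0) (hz : ∀ i, 0 ≤ z i)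
    {c : ℝ} (hc : c ≤ 1) : exp (∑ i, z i * b i) ≤ exp (∑ i, (c • z) i * b i) := by
  refine exp_le_exp.2 (Finset.sum_le_sum fun i _ => ?_)
  rw [Pi.smul_apply, smul_eq_mul]
  nlinarith [mul_nonpos_of_nonneg_of_nonpos (hz i) (hb i)]

end

/-- Lemma `L:Ixtoy`.  Let `n ≥ 2`, `x < y`, and `a_0,…,a_{n−1} ≤ y`.
Then `I_n(t;𝐚,x) ≤ (n/((y−x)t))·I_n(t;𝐚,y)`. -/
theorem statement12 (n : ℕ) (hn : 2 ≤ n) (t : ℝ) (ht : 0 < t)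
    (x y : ℝ) (hxy : x < y) (a : Fin n → ℝ) (ha : ∀ i, a i ≤ y) :
    Ifun n t (Fin.snoc a x) ≤ ((n : ℝ) / ((y - x) * t)) * Ifun n t (Fin.snoc a y) := by
  have hsplit : ∀ z : Fin n → ℝ, exp (∑ i, z i * (a i - x))
      = exp (∑ i, z i * (a i - y)) * exp ((y - x) * ∑ i, z i) := by
    intro z
    rw [← exp_add, Finset.mul_sum, ← Finset.sum_add_distrib]
    exact congrArg exp (Finset.sum_congr rfl fun i _ => by ring)
  have hcore := setIntegral_simplexLT_mul_exp_sum_le (by omega) (sub_pos.2 hxy) ht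
    (fun z _ => (exp_pos _).le)
    ((by fun_prop : Continuous fun z : Fin n → ℝ => exp (∑ i, z i * (a i - y))).integrableOn_Icc
      |>.mono_set simplexLT_subset_Icc)
    fun z hz c hc => exp_sum_mul_le_exp_sum_smul_mul (fun i => sub_nonpos.2 (ha i)) hz.1 hc.2
  rw [Ifun_snoc, Ifun_snoc]
  simp_rw [hsplit]
  calc exp (t * x) * ∫ z in simplexLT n t, exp (∑ i, z i * (a i - y)) * exp ((y - x) * ∑ i, z i)
      ≤ exp (t * x) * (n / ((y - x) * t) * exp ((y - x) * t)
          * ∫ z in simplexLT n t, exp (∑ i, z i * (a i - y))) := by gcongr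
    _ = n / ((y - x) * t) * (exp (t * y) * ∫ z in simplexLT n t, exp (∑ i, z i * (a i - y))) := by
        rw [show t * y = t * x + (y - x) * t by ring, exp_add]
        ring
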